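/- arXiv:2204.00702 — 2 statements merged into one kernel-verified Lean document; each statement's English description precedes it below -/
import Mathlib

section
/- Let A ∈ ℝ^{n×n}, B ∈ ℝ^{n×m}, C ∈ ℝ^{p×n}. Define 𝒪 = [C; CA; ...; CA^n], 𝓕₁ the block matrix with (i,k) block C·A^{i−1−k}·B for 0 ≤ k < i ≤ n and zero otherwise, 𝓕₃ obtained from 𝓕₁ by replacing B with the n×n identity, 𝒢₁ = [A^{n−1}·B, A^{n−2}·B, ..., B] ∈ ℝ^{n×nm}, and 𝒢₂ = [A^{n−1}, A^{n−2}, ..., I_n] ∈ ℝ^{n×n·n}. Assume 𝒪ᵀ·𝒪 is invertible and set 𝒪^† = (𝒪ᵀ·𝒪)⁻¹·𝒪ᵀ. Let x : ℕ → ℝ^n, u : ℕ → ℝ^m, w : ℕ → ℝ^n, v : ℕ → ℝ^p, y : ℕ → ℝ^p satisfy x(t+1) = A·x(t) + B·u(t) + w(t) and y(t) = C·x(t) + v(t) for all t ≥ 0. Then for every t ≥ n, x(t) = (𝒢₁ − A^n·𝒪^†·𝓕₁)·U(t−1) + A^n·𝒪^†·Y(t) + (𝒢₂ − A^n·𝒪^†·𝓕₃)·W(t−1)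 − A^n·𝒪^†·V(t), where U(t−1) = [u(t−n); ...; u(t−1)], Y(t) = [y(t−n); ...; y(t)], W(t−1) = [w(t−n); ...; w(t−1)], V(t) = [v(t−n); ...; v(t)]. -/
/-!
Write `t = s + n`. Unrolling the recursion from time `s` gives, on the one hand,
`Y = 𝒪 x(s) + 𝓕₁ U + 𝓕₃ W + V` for the stacked outputs over the window, and on the other hand
`x(s + n) = Aⁿ x(s) + 𝒢₁ U + 𝒢₂ W`. Since `𝒪†` is a left inverse of `𝒪`, the first identity
determines `x(s) = 𝒪† (Y - 𝓕₁ U - 𝓕₃ W - V)`; substituting this into the second gives the claim.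
-/

open Matrix Finset

section BlockMatrices

variable {R κ β : Type*} [Semiring R] [Fintype β]

def blockRow (M : ℕ → Matrix κ β R) (N : ℕ) : Matrix κ (Fin N × β) R :=
  of fun a kb => M kb.1 a kb.2

def blockCol (M : ℕ → Matrix κ β R) (N : ℕ) : Matrix (Fin N × κ) β R :=
  of fun ia b => M ia.1 ia.2 b

def blockToeplitz (T : ℕ → Matrix κ β R) (N : ℕ) : Matrix (Fin (N + 1) × κ) (Fin N × β) R :=
  of fun ia kb => if (kb.1 : ℕ) < ia.1 then T (ia.1 - 1 - kb.1) ia.2 kb.2 else 0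

def window (V : ℕ → β → R) (s N : ℕ) : Fin N × β → R :=
  fun kb => V (s + kb.1) kb.2

theorem blockCol_mulVec_apply (M : ℕ → Matrix κ β R) (N : ℕ) (v : β → R) (i : Fin N) (a : κ) :
    (blockCol M N *ᵥ v) (i, a) = (M i *ᵥ v) a :=
  rfl

theorem blockRow_mulVec_window (M : ℕ → Matrix κ β R) (V : ℕ → β → R) (s N : ℕ) :
    blockRow M N *ᵥ window V s N = ∑ k ∈ range N, M k *ᵥ V (s + k) := by
  ext a
  rw [Finset.sum_apply, ← Fin.sum_univ_eq_sum_range (fun k => (M k *ᵥ V (s + k)) a)]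
  simp only [mulVec, dotProduct, Fintype.sum_prod_type, blockRow, window, of_apply]

theorem sum_range_ite_lt {M : Type*} [AddCommMonoid M] {i N : ℕ} (hi : i ≤ N) (f : ℕ → M) :
    ∑ k ∈ range N, (if k < i then f k else 0) = ∑ k ∈ range i, f k := by
  rw [← sum_filter]
  congr 1
  ext k
  simp only [mem_filter, mem_range]
  omega

theorem blockToeplitz_mulVec_window_apply (T : ℕ → Matrix κ β R) (V : ℕ → β → R) (s N : ℕ)
    (i : Fin (N + 1)) (a : κ) :
    (blockToeplitz T N *ᵥ window V s N) (i, a) = (∑ k ∈ range i, T (i - 1 - k) *ᵥ V (s + k)) a := by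
  have hrow : (blockToeplitz T N *ᵥ window V s N) (i, a) =
      (blockRow (fun k => if k < i then T (i - 1 - k) else 0) N *ᵥ window V s N) a := by
    refine sum_congr rfl fun kb _ => ?_
    simp only [blockToeplitz, blockRow, of_apply]
    split_ifs <;> rfl
  rw [hrow, blockRow_mulVec_window, ← sum_range_ite_lt (Nat.lt_succ_iff.mp i.isLt)]
  refine congrFun (sum_congr rfl fun k _ => ?_) a
  split_ifs <;> simp only [zero_mulVec]

end BlockMatrices

section Trajectories

variable {R ι κ π : Type*} [Semiring R] [Fintype ι] [DecidableEq ι] [Fintype κ]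

theorem eq_pow_mulVec_add_sum_of_succ (A : Matrix ι ι R) (x f : ℕ → ι → R)
    (hx : ∀ t, x (t + 1) = A *ᵥ x t + f t) (s i : ℕ) :
    x (s + i) = A ^ i *ᵥ x s + ∑ k ∈ range i, A ^ (i - 1 - k) *ᵥ f (s + k) := by
  induction i with
  | zero => simp
  | succ i ih =>
    have hpow : ∀ k ∈ range i, A *ᵥ (A ^ (i - 1 - k) *ᵥ f (s + k)) = A ^ (i - k) *ᵥ f (s + k) := by
      intro k hk
      rw [mulVec_mulVec, ← pow_succ', show i - 1 - k + 1 = i - k by grind]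
    rw [← add_assoc, hx, ih, mulVec_add, mulVec_mulVec, ← pow_succ', mulVec_sum,
      sum_congr rfl hpow, sum_range_succ, Nat.add_sub_cancel, Nat.sub_self, pow_zero, one_mulVec,
      add_assoc]

theorem state_add_eq_pow_mulVec_add_blockRow (A : Matrix ι ι R) (B : Matrix ι κ R)
    (x : ℕ → ι → R) (u : ℕ → κ → R) (w : ℕ → ι → R)
    (hx : ∀ t, x (t + 1) = A *ᵥ x t + B *ᵥ u t + w t) (s N : ℕ) :
    x (s + N) = A ^ N *ᵥ x s + blockRow (fun k => A ^ (N - 1 - k) * B) N *ᵥ window u s N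
      + blockRow (fun k => A ^ (N - 1 - k)) N *ᵥ window w s N := by
  rw [eq_pow_mulVec_add_sum_of_succ A x (fun t => B *ᵥ u t + w t)
    (fun t => by rw [hx, add_assoc]), blockRow_mulVec_window, blockRow_mulVec_window, add_assoc,
    ← sum_add_distrib]
  simp only [mulVec_add, mulVec_mulVec]

theorem window_output_eq_blockCol_add_blockToeplitz [Fintype π] (A : Matrix ι ι R)
    (B : Matrix ι κ R) (C : Matrix π ι R) (x : ℕ → ι → R) (u : ℕ → κ → R) (w : ℕ → ι → R)
    (v y : ℕ → π → R)
    (hx : ∀ t, x (t + 1) = A *ᵥ x t + B *ᵥ u t + w t) (hy : ∀ t, y t = C *ᵥ x t + v t)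
    (s N : ℕ) :
    window y s (N + 1) = blockCol (fun i => C * A ^ i) (N + 1) *ᵥ x s
      + blockToeplitz (fun j => C * A ^ j * B) N *ᵥ window u s N
      + blockToeplitz (fun j => C * A ^ j) N *ᵥ window w s N + window v s (N + 1) := by
  ext ⟨i, a⟩
  simp only [Pi.add_apply, blockCol_mulVec_apply, blockToeplitz_mulVec_window_apply]
  rw [window, window, hy, eq_pow_mulVec_add_sum_of_succ A x (fun t => B *ᵥ u t + w t)
    (fun t => by rw [hx, add_assoc])]
  simp only [mulVec_add, mulVec_sum, sum_add_distrib, mulVec_mulVec, Matrix.mul_assoc,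
    Pi.add_apply, add_assoc]

end Trajectories

/-- **State reconstruction from the behavioral vector (`x(t) = 𝓗 z(t)`).**
With `𝒪† = (𝒪ᵀ𝒪)⁻¹𝒪ᵀ`, for all `t ≥ n`,
`x(t) = (𝒢₁ - Aⁿ𝒪†𝓕₁) U(t-1) + Aⁿ𝒪† Y(t) + (𝒢₂ - Aⁿ𝒪†𝓕₃) W(t-1) - Aⁿ𝒪† V(t)`. -/
theorem state_from_behavior {n m p : ℕ}
    (A : Matrix (Fin n) (Fin n) ℝ) (B : Matrix (Fin n) (Fin m) ℝ)
    (C : Matrix (Fin p) (Fin n) ℝ)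
    -- 𝒪 = [C; CA; …; CAⁿ]
    (O : Matrix (Fin (n + 1) × Fin p) (Fin n) ℝ)
    (hO : O = Matrix.of fun ia b => (C * A ^ (ia.1 : ℕ)) ia.2 b)
    -- 𝓕₁ : (i,k) block is C A^{i-1-k} B for k < i, zero otherwise
    (F₁ : Matrix (Fin (n + 1) × Fin p) (Fin n × Fin m) ℝ)
    (hF₁ : F₁ = Matrix.of fun ia kb =>
      if (kb.1 : ℕ) < (ia.1 : ℕ) then (C * A ^ ((ia.1 : ℕ) - 1 - (kb.1 : ℕ)) * B) ia.2 kb.2 else 0)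
    -- 𝓕₃ : obtained from 𝓕₁ by replacing B with the identity
    (F₃ : Matrix (Fin (n + 1) × Fin p) (Fin n × Fin n) ℝ)
    (hF₃ : F₃ = Matrix.of fun ia kb =>
      if (kb.1 : ℕ) < (ia.1 : ℕ) then (C * A ^ ((ia.1 : ℕ) - 1 - (kb.1 : ℕ))) ia.2 kb.2 else 0)
    -- 𝒢₁ = [A^{n-1} B, A^{n-2} B, …, B]
    (G₁ : Matrix (Fin n) (Fin n × Fin m) ℝ)
    (hG₁ : G₁ = Matrix.of fun a kb => (A ^ (n - 1 - (kb.1 : ℕ)) * B) a kb.2)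
    -- 𝒢₂ = [A^{n-1}, A^{n-2}, …, Iₙ]
    (G₂ : Matrix (Fin n) (Fin n × Fin n) ℝ)
    (hG₂ : G₂ = Matrix.of fun a kb => (A ^ (n - 1 - (kb.1 : ℕ))) a kb.2)
    -- observability: 𝒪ᵀ𝒪 invertible, 𝒪† = (𝒪ᵀ𝒪)⁻¹𝒪ᵀ
    (hobs : IsUnit (Oᵀ * O).det)
    (Odag : Matrix (Fin n) (Fin (n + 1) × Fin p) ℝ)
    (hOdag : Odag = (Oᵀ * O)⁻¹ * Oᵀ)
    (x : ℕ → Fin n → ℝ) (u : ℕ → Fin m → ℝ) (w : ℕ → Fin n → ℝ)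
    (v y : ℕ → Fin p → ℝ)
    (hx : ∀ t, x (t + 1) = A.mulVec (x t) + B.mulVec (u t) + w t)
    (hy : ∀ t, y t = C.mulVec (x t) + v t) :
    ∀ t, n ≤ t →
      x t = (G₁ - A ^ n * Odag * F₁).mulVec (fun kb : Fin n × Fin m => u (t - n + (kb.1 : ℕ)) kb.2)
        + (A ^ n * Odag).mulVec (fun ja : Fin (n + 1) × Fin p => y (t - n + (ja.1 : ℕ)) ja.2)
        + (G₂ - A ^ n * Odag * F₃).mulVec (fun kb : Fin n × Fin n => w (t - n + (kb.1 : ℕ)) kb.2)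
        - (A ^ n * Odag).mulVec (fun ja : Fin (n + 1) × Fin p => v (t - n + (ja.1 : ℕ)) ja.2) := by
  intro t ht
  obtain ⟨s, rfl⟩ : ∃ s, t = s + n := ⟨t - n, by omega⟩
  have hshift : x (s + n) = A ^ n *ᵥ x s + G₁ *ᵥ window u s n + G₂ *ᵥ window w s n := by
    subst hG₁ hG₂
    exact state_add_eq_pow_mulVec_add_blockRow A B x u w hx s n
  have houtput : window y s (n + 1) =
      O *ᵥ x s + F₁ *ᵥ window u s n + F₃ *ᵥ window w s n + window v s (n + 1) := by
    subst hO hF₁ hF₃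
    exact window_output_eq_blockCol_add_blockToeplitz A B C x u w v y hx hy s n
  have hleft : Odag * O = 1 := by rw [hOdag, Matrix.mul_assoc, nonsing_inv_mul _ hobs]
  have hxs : x s = Odag *ᵥ window y s (n + 1) - (Odag * F₁) *ᵥ window u s n
      - (Odag * F₃) *ᵥ window w s n - Odag *ᵥ window v s (n + 1) := by
    simp only [houtput, mulVec_add, mulVec_mulVec, hleft, one_mulVec]
    abel
  rw [Nat.add_sub_cancel]
  change _ = _ *ᵥ window u s n + _ *ᵥ window y s (n + 1) + _ *ᵥ window w s n
    - _ *ᵥ window v s (n + 1)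
  rw [hshift, hxs]
  simp only [sub_mulVec, mulVec_sub, mulVec_mulVec, Matrix.mul_assoc]
  abel
end

section
/- Let 𝒜, P, dP, M, Q_z be real N×N matrices, B_u ∈ ℝ^{N×m}, C_z ∈ ℝ^{q×N}, K, dK ∈ ℝ^{m×q}, and R_u ∈ ℝ^{m×m}. Assume P, M, Q_z, R_u are symmetric, and set 𝒜_c = 𝒜 + B_u·K·C_z and Q_K = Q_z + C_zᵀ·Kᵀ·R_u·K·C_z. Assume M = 𝒜_cᵀ·M·𝒜_c + Q_K, and dP = 𝒜_c·dP·𝒜_cᵀ + (B_u·dK·C_z)·P·𝒜_cᵀ + 𝒜_c·P·(B_u·dK·C_z)ᵀ. Then trace((C_zᵀ·dKᵀ·R_u·K·C_z + C_zᵀ·Kᵀ·R_u·dK·C_z)·P) + trace(Q_K·dP) = 2·trace((C_z·P·C_zᵀ·Kᵀ·R_u + C_z·P·𝒜_cᵀ·M·B_u)·dK). -/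
/-!
Write `Q_K = M - 𝒜_cᵀ M 𝒜_c` using the Lyapunov equation for `M`. By cyclicity of the trace,
`trace(Q_K dP) = trace(M (dP - 𝒜_c dP 𝒜_cᵀ))`, and the Lyapunov equation for `dP` turns the
right-hand side into `trace(M (X + Xᵀ))` with `X = B_u dK C_z P 𝒜_cᵀ`. Since `M` and `P` are
symmetric, a symmetrised term `Y + Yᵀ` contributes twice the trace of `Y`, and a final cyclic
rotation brings `dK` to the end.
-/

open Matrix

namespace Matrix

variable {n R : Type*} [Fintype n]

section CommSemiring

variable [CommSemiring R]

theorem trace_add_transpose_mul_of_transpose_eq {P : Matrix n n R} (hP : Pᵀ = P)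
    (Y : Matrix n n R) : ((Y + Yᵀ) * P).trace = 2 * (Y * P).trace := by
  have : (Yᵀ * P).trace = (Y * P).trace := by
    rw [← trace_transpose_mul, hP, transpose_transpose]
  rw [add_mul, trace_add, this, two_mul]

theorem trace_mul_add_transpose_of_transpose_eq {M : Matrix n n R} (hM : Mᵀ = M)
    (Y : Matrix n n R) : (M * (Y + Yᵀ)).trace = 2 * (M * Y).trace := by
  rw [trace_mul_comm, trace_add_transpose_mul_of_transpose_eq hM, trace_mul_comm]

end CommSemiring

/-- `M = AᵀMA + Q` and `X = AXAᵀ + S` are the adjoint pair of Stein (discrete Lyapunov)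
equations. -/
theorem trace_mul_eq_of_stein [CommRing R] {A M Q X S : Matrix n n R}
    (hM : M = Aᵀ * M * A + Q) (hX : X = A * X * Aᵀ + S) :
    (Q * X).trace = (M * S).trace := by
  have hQ : Q = M - Aᵀ * M * A := eq_sub_of_add_eq' hM.symm
  have hS : S = X - A * X * Aᵀ := eq_sub_of_add_eq' hX.symm
  have hcycle : (Aᵀ * M * A * X).trace = (M * (A * X * Aᵀ)).trace := by
    rw [mul_assoc, mul_assoc, trace_mul_comm]
    simp only [mul_assoc]
  rw [hQ, hS, sub_mul, trace_sub, hcycle, mul_sub, trace_sub]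

end Matrix

theorem lqg_cost_gradient_formula_general {N m q : ℕ}
    (P dP M : Matrix (Fin N) (Fin N) ℝ)
    (Bu : Matrix (Fin N) (Fin m) ℝ) (Cz : Matrix (Fin q) (Fin N) ℝ)
    (K dK : Matrix (Fin m) (Fin q) ℝ) (Ru : Matrix (Fin m) (Fin m) ℝ)
    (hP : Pᵀ = P) (hM : Mᵀ = M) (hRu : Ruᵀ = Ru)
    (Ac : Matrix (Fin N) (Fin N) ℝ)
    (QK : Matrix (Fin N) (Fin N) ℝ)
    (hMeq : M = Acᵀ * M * Ac + QK)
    (hdP : dP = Ac * dP * Acᵀ + (Bu * dK * Cz) * P * Acᵀ + Ac * P * (Bu * dK * Cz)ᵀ) :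
    ((Czᵀ * dKᵀ * Ru * K * Cz + Czᵀ * Kᵀ * Ru * dK * Cz) * P).trace + (QK * dP).trace
      = 2 * ((Cz * P * Czᵀ * Kᵀ * Ru + Cz * P * Acᵀ * M * Bu) * dK).trace := by
  have hcontrol : Czᵀ * dKᵀ * Ru * K * Cz + Czᵀ * Kᵀ * Ru * dK * Cz
      = Czᵀ * Kᵀ * Ru * dK * Cz + (Czᵀ * Kᵀ * Ru * dK * Cz)ᵀ := by
    rw [add_comm]
    simp only [transpose_mul, transpose_transpose, hRu, Matrix.mul_assoc]
  have hsource : Bu * dK * Cz * P * Acᵀ + Ac * P * (Bu * dK * Cz)ᵀ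
      = Bu * dK * Cz * P * Acᵀ + (Bu * dK * Cz * P * Acᵀ)ᵀ := by
    simp only [transpose_mul, transpose_transpose, hP, Matrix.mul_assoc]
  have hstate : (QK * dP).trace = 2 * (M * (Bu * dK * Cz * P * Acᵀ)).trace := by
    rw [trace_mul_eq_of_stein hMeq (hdP.trans (add_assoc _ _ _)), hsource,
      trace_mul_add_transpose_of_transpose_eq hM]
  have hrotate_control : (Czᵀ * Kᵀ * Ru * dK * Cz * P).trace
      = (Cz * P * Czᵀ * Kᵀ * Ru * dK).trace := by
    rw [Matrix.mul_assoc _ Cz P, trace_mul_comm]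
    simp only [Matrix.mul_assoc]
  have hrotate_state : (M * (Bu * dK * Cz * P * Acᵀ)).trace
      = (Cz * P * Acᵀ * M * Bu * dK).trace := calc
    _ = (M * Bu * dK * (Cz * P * Acᵀ)).trace := by simp only [Matrix.mul_assoc]
    _ = _ := by rw [trace_mul_comm]; simp only [Matrix.mul_assoc]
  rw [hcontrol, trace_add_transpose_mul_of_transpose_eq hP, hstate, hrotate_control,
    hrotate_state, Matrix.add_mul, trace_add, mul_add]

/-- **Gradient formula for the behavioral LQG cost.**
With `𝒜_c = 𝒜 + B_u K C_z`, `Q_K = Q_z + C_zᵀ Kᵀ R_u K C_z`, `M = 𝒜_cᵀ M 𝒜_c + Q_K`, and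
`dP = 𝒜_c dP 𝒜_cᵀ + (B_u dK C_z) P 𝒜_cᵀ + 𝒜_c P (B_u dK C_z)ᵀ`, the differential of the
cost satisfies
`trace((C_zᵀ dKᵀ R_u K C_z + C_zᵀ Kᵀ R_u dK C_z) P) + trace(Q_K dP)
  = 2 trace((C_z P C_zᵀ Kᵀ R_u + C_z P 𝒜_cᵀ M B_u) dK)`. -/
theorem lqg_cost_gradient_formula {N m q : ℕ}
    (A P dP M Qz : Matrix (Fin N) (Fin N) ℝ)
    (Bu : Matrix (Fin N) (Fin m) ℝ) (Cz : Matrix (Fin q) (Fin N) ℝ)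
    (K dK : Matrix (Fin m) (Fin q) ℝ) (Ru : Matrix (Fin m) (Fin m) ℝ)
    (hP : Pᵀ = P) (hM : Mᵀ = M) (hQz : Qzᵀ = Qz) (hRu : Ruᵀ = Ru)
    (Ac : Matrix (Fin N) (Fin N) ℝ) (hAc : Ac = A + Bu * K * Cz)
    (QK : Matrix (Fin N) (Fin N) ℝ) (hQK : QK = Qz + Czᵀ * Kᵀ * Ru * K * Cz)
    (hMeq : M = Acᵀ * M * Ac + QK)
    (hdP : dP = Ac * dP * Acᵀ + (Bu * dK * Cz) * P * Acᵀ + Ac * P * (Bu * dK * Cz)ᵀ) :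
    ((Czᵀ * dKᵀ * Ru * K * Cz + Czᵀ * Kᵀ * Ru * dK * Cz) * P).trace + (QK * dP).trace
      = 2 * ((Cz * P * Czᵀ * Kᵀ * Ru + Cz * P * Acᵀ * M * Bu) * dK).trace :=
  lqg_cost_gradient_formula_general P dP M Bu Cz K dK Ru hP hM hRu Ac QK hMeq hdP
end
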